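/- Let M be a valuated matroid of rank r on E with extension ν̃_M. For all S, T with |S| < |T| ≤ r and ν̃_M(S), ν̃_M(T) not both ∞, there exists t ∈ T − S such that ν̃_M(S) + ν̃_M(T) ≥ ν̃_M(S ∪ {t}) + ν̃_M(T − {t}) (the valuated augmentation property). -/

import Mathlib

open Finset
open scoped Classical

noncomputable section

/-- The valuated symmetric basis exchange property for a map on `r`-element subsets. -/
def ExchProp {E Γ : Type*} [AddCommGroup Γ] [LinearOrder Γ] [IsOrderedAddMonoid Γ]
    (r : ℕ) (ν : Finset E → WithTop Γ) : Prop :=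
  ∀ S T : Finset E, S.card = r → T.card = r → ∀ s ∈ S, s ∉ T →
    ∃ t ∈ T, t ∉ S ∧
      ν (insert t (S.erase s)) + ν (insert s (T.erase t)) ≤ ν S + ν T

/-- A valuated matroid of rank `r`: not identically `∞` on `r`-sets, and the
valuated basis exchange property. -/
def IsVMatroid {E Γ : Type*} [AddCommGroup Γ] [LinearOrder Γ] [IsOrderedAddMonoid Γ]
    (r : ℕ) (ν : Finset E → WithTop Γ) : Prop :=
  (∃ B : Finset E, B.card = r ∧ ν B ≠ ⊤) ∧ ExchProp r ν

/-- The independent-set extension `ν̃(S) = min {ν B : S ⊆ B, |B| = r}`. -/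
def extν {E Γ : Type*} [Fintype E] [AddCommGroup Γ] [LinearOrder Γ] [IsOrderedAddMonoid Γ]
    (r : ℕ) (ν : Finset E → WithTop Γ) (S : Finset E) : WithTop Γ :=
  ((Finset.univ.powersetCard r).filter (fun B => S ⊆ B)).inf ν

lemma extν_le {E Γ : Type*} [Fintype E] [AddCommGroup Γ] [LinearOrder Γ] [IsOrderedAddMonoid Γ]
    (r : ℕ) (ν : Finset E → WithTop Γ) {S B : Finset E}
    (hB : B.card = r) (hSB : S ⊆ B) : extν r ν S ≤ ν B :=
  Finset.inf_le (by simp [Finset.mem_powersetCard, hB, hSB])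

lemma extν_mono {E Γ : Type*} [Fintype E] [AddCommGroup Γ] [LinearOrder Γ] [IsOrderedAddMonoid Γ]
    (r : ℕ) (ν : Finset E → WithTop Γ) {S S' : Finset E}
    (h : S ⊆ S') : extν r ν S ≤ extν r ν S' := by
  apply Finset.inf_mono
  intro B hB
  simp only [Finset.mem_filter] at hB ⊢
  exact ⟨hB.1, h.trans hB.2⟩

lemma extν_exists {E Γ : Type*} [Fintype E] [AddCommGroup Γ] [LinearOrder Γ] [IsOrderedAddMonoid Γ]
    (r : ℕ) (ν : Finset E → WithTop Γ) {S : Finset E}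
    (h : extν r ν S ≠ ⊤) : ∃ B : Finset E, B.card = r ∧ S ⊆ B ∧ ν B = extν r ν S := by
  rcases ((Finset.univ.powersetCard r).filter (fun B => S ⊆ B)).eq_empty_or_nonempty
    with he | hne
  · exfalso; apply h; rw [extν, he, Finset.inf_empty]
  · obtain ⟨B, hBmem, hBeq⟩ := Finset.exists_mem_eq_inf _ hne ν
    rw [Finset.mem_filter, Finset.mem_powersetCard] at hBmem
    exact ⟨B, hBmem.1.2, hBmem.2, hBeq.symm⟩

/-- the valuated augmentation property for the independent-set extension. -/
theorem extension_augmentation {E Γ : Type*} [Fintype E] [AddCommGroup Γ] [LinearOrder Γ] [IsOrderedAddMonoid Γ]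
    (r : ℕ) (ν : Finset E → WithTop Γ) (hM : IsVMatroid r ν)
    (S T : Finset E) (hST : S.card < T.card) (hT : T.card ≤ r)
    (hfin : extν r ν S ≠ ⊤ ∨ extν r ν T ≠ ⊤) :
    ∃ t ∈ T, t ∉ S ∧
      extν r ν (insert t S) + extν r ν (T.erase t) ≤ extν r ν S + extν r ν T := by
  obtain ⟨tT, htT⟩ : (T \ S).Nonempty := by
    rw [Finset.sdiff_nonempty]
    exact fun h => absurd (Finset.card_le_card h) (Nat.not_le.2 hST)
  by_cases htop : extν r ν S = ⊤ ∨ extν r ν T = ⊤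
  · rw [Finset.mem_sdiff] at htT
    refine ⟨tT, htT.1, htT.2, ?_⟩
    rcases htop with h | h
    · simp [h]
    · simp [h]
  push_neg at htop
  obtain ⟨hStop, hTtop⟩ := htop
  obtain ⟨BT, hBTr, hTBT, hBTval⟩ := extν_exists r ν hTtop
  classical
  set P : Finset (Finset E) :=
    (((Finset.univ.powersetCard r).filter (fun B => S ⊆ B)).filter
      (fun B => ν B = extν r ν S)) with hP
  have hPne : P.Nonempty := by
    obtain ⟨B, h1, h2, h3⟩ := extν_exists r ν hStop
    refine ⟨B, ?_⟩
    simp only [hP, Finset.mem_filter, Finset.mem_powersetCard]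
    exact ⟨⟨⟨Finset.subset_univ _, h1⟩, h2⟩, h3⟩
  obtain ⟨BS, hBSP, hBSmax⟩ := P.exists_max_image (fun B => (B ∩ BT).card) hPne
  have hBSP' := hBSP
  simp only [hP, Finset.mem_filter, Finset.mem_powersetCard] at hBSP'
  obtain ⟨⟨⟨-, hBSr⟩, hSBS⟩, hBSval⟩ := hBSP'
  by_cases hx : ∃ t, t ∈ T ∧ t ∉ S ∧ t ∈ BS
  · obtain ⟨t, htT', htS, htBS⟩ := hx
    refine ⟨t, htT', htS, ?_⟩
    have h1 : extν r ν (insert t S) ≤ extν r ν S := by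
      calc extν r ν (insert t S) ≤ ν BS := extν_le r ν hBSr (Finset.insert_subset htBS hSBS)
        _ = extν r ν S := hBSval
    have h2 : extν r ν (T.erase t) ≤ extν r ν T := extν_mono r ν (Finset.erase_subset _ _)
    exact add_le_add h1 h2
  · push_neg at hx
    have hTSsub : T \ S ⊆ BT \ BS := by
      intro x hx'
      rw [Finset.mem_sdiff] at hx' ⊢
      exact ⟨hTBT hx'.1, hx x hx'.1 hx'.2⟩
    have hsexists : ∃ s, s ∈ BS ∧ s ∉ BT ∧ s ∉ S := by
      by_contra hcon
      push_neg at hcon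
      have hsub : BS \ BT ⊆ S \ T := by
        intro x hx'
        rw [Finset.mem_sdiff] at hx' ⊢
        exact ⟨hcon x hx'.1 hx'.2, fun hT' => hx'.2 (hTBT hT')⟩
      have c1 : (BS \ BT).card ≤ (S \ T).card := Finset.card_le_card hsub
      have c2 : (T \ S).card ≤ (BT \ BS).card := Finset.card_le_card hTSsub
      have c3 : (BT \ BS).card = (BS \ BT).card :=
        Finset.card_sdiff_comm (hBTr.trans hBSr.symm)
      have e1 : (S \ T).card + (S ∩ T).card = S.card := Finset.card_sdiff_add_card_inter S T
      have e2 : (T \ S).card + (S ∩ T).card = T.card := by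
        rw [Finset.inter_comm]; exact Finset.card_sdiff_add_card_inter T S
      omega
    obtain ⟨s, hsBS, hsBT, hsS⟩ := hsexists
    obtain ⟨t, htBT, htBS, hexch⟩ := hM.2 BS BT hBSr hBTr s hsBS hsBT
    have htS : t ∉ S := fun h => htBS (hSBS h)
    have hr1 : 1 ≤ r := hBSr ▸ Finset.card_pos.mpr ⟨s, hsBS⟩
    have hcard1 : (insert t (BS.erase s)).card = r := by
      rw [Finset.card_insert_of_notMem (fun h => htBS (Finset.mem_of_mem_erase h)),
          Finset.card_erase_of_mem hsBS, hBSr]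
      omega
    have hcard2 : (insert s (BT.erase t)).card = r := by
      rw [Finset.card_insert_of_notMem (fun h => hsBT (Finset.mem_of_mem_erase h)),
          Finset.card_erase_of_mem htBT, hBTr]
      omega
    have hSsub1 : S ⊆ insert t (BS.erase s) := by
      intro x hx'
      exact Finset.mem_insert_of_mem (Finset.mem_erase.2 ⟨fun he => hsS (he ▸ hx'), hSBS hx'⟩)
    by_cases htT' : t ∈ T
    · refine ⟨t, htT', htS, ?_⟩
      have h1 : extν r ν (insert t S) ≤ ν (insert t (BS.erase s)) :=
        extν_le r ν hcard1 (Finset.insert_subset (Finset.mem_insert_self t _) hSsub1)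
      have h2 : extν r ν (T.erase t) ≤ ν (insert s (BT.erase t)) := by
        apply extν_le r ν hcard2
        exact (Finset.erase_subset_erase t hTBT).trans (Finset.subset_insert _ _)
      calc extν r ν (insert t S) + extν r ν (T.erase t)
          ≤ ν (insert t (BS.erase s)) + ν (insert s (BT.erase t)) := add_le_add h1 h2
        _ ≤ ν BS + ν BT := hexch
        _ = extν r ν S + extν r ν T := by rw [hBSval, hBTval]
    · exfalso
      have hTsub : T ⊆ insert s (BT.erase t) := by
        intro x hx'
        exact Finset.mem_insert_of_mem
          (Finset.mem_erase.2 ⟨fun he => htT' (he ▸ hx'), hTBT hx'⟩)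
      have ha : extν r ν S ≤ ν (insert t (BS.erase s)) := extν_le r ν hcard1 hSsub1
      have hb : extν r ν T ≤ ν (insert s (BT.erase t)) := extν_le r ν hcard2 hTsub
      have hsum : ν (insert t (BS.erase s)) + ν (insert s (BT.erase t))
          ≤ extν r ν S + extν r ν T := by
        rw [hBSval, hBTval] at hexch; exact hexch
      have hb' : ν (insert s (BT.erase t)) ≤ extν r ν T := by
        have hh : extν r ν S + ν (insert s (BT.erase t)) ≤ extν r ν S + extν r ν T :=
          le_trans (add_le_add ha le_rfl) hsum
        exact (WithTop.add_le_add_iff_left hStop).1 hh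
      have hbb : ν (insert s (BT.erase t)) = extν r ν T := le_antisymm hb' hb
      have ha' : ν (insert t (BS.erase s)) ≤ extν r ν S := by
        have hh : ν (insert t (BS.erase s)) + extν r ν T ≤ extν r ν S + extν r ν T := by
          rwa [hbb] at hsum
        exact (WithTop.add_le_add_iff_right hTtop).1 hh
      have haeq : ν (insert t (BS.erase s)) = extν r ν S := le_antisymm ha' ha
      have hmem : insert t (BS.erase s) ∈ P := by
        simp only [hP, Finset.mem_filter, Finset.mem_powersetCard]
        exact ⟨⟨⟨Finset.subset_univ _, hcard1⟩, hSsub1⟩, haeq⟩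
      have hle := hBSmax _ hmem
      have hint : (insert t (BS.erase s)) ∩ BT = insert t (BS ∩ BT) := by
        ext x
        simp only [Finset.mem_inter, Finset.mem_insert, Finset.mem_erase]
        constructor
        · rintro ⟨(rfl | ⟨hxs, hxBS⟩), hxBT⟩
          · exact Or.inl rfl
          · exact Or.inr ⟨hxBS, hxBT⟩
        · rintro (rfl | ⟨h1, h2⟩)
          · exact ⟨Or.inl rfl, htBT⟩
          · exact ⟨Or.inr ⟨fun he => hsBT (he ▸ h2), h1⟩, h2⟩
      have hcc : (insert t (BS ∩ BT)).card = (BS ∩ BT).card + 1 :=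
        Finset.card_insert_of_notMem (fun h => htBS (Finset.mem_inter.1 h).1)
      simp only [hint, hcc] at hle
      omega
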